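/- There exists a pivot Gray code listing of all spanning trees of the fan graph F_n for every n ≥ 2: an ordering T_1, T_2, ..., T_{t_n} of all t_n spanning trees of F_n such that for each i, T_{i+1} = T_i − uv + uw for some vertices u, v, w (the removed and added edges share the common endpoint u). -/

import Mathlib

/-- The fan graph `F_n` on vertex set `Fin n`, where index `0` is the hub `v_∞`
and indices `1, …, n-1` correspond to the path vertices `v_2, …, v_n`. -/
def fanGraph (n : ℕ) : SimpleGraph (Fin n) :=
  SimpleGraph.fromRel (fun a b => (a : ℕ) = 0 ∨ ((a : ℕ) ≠ 0 ∧ (b : ℕ) = (a : ℕ) + 1))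

/-- The number of spanning trees of the fan graph `F_n`. -/
noncomputable def fanTreeCount (n : ℕ) : ℕ :=
  Nat.card {H : SimpleGraph (Fin n) // H ≤ fanGraph n ∧ H.IsTree}

open Fin.NatCast

namespace FanGray

inductive Sym : Type
  | L | H | R
deriving DecidableEq

open List

/-- symbol at index `i` (out of range: `H`). -/
def g (c : List Sym) (i : ℕ) : Sym := c.getD i .H

def NoRL (c : List Sym) : Prop := ∀ i, ¬(g c i = .R ∧ g c (i+1) = .L)

def OkA (c : List Sym) : Prop := g c 0 ≠ .L ∧ NoRL c

def Ok (c : List Sym) : Prop := OkA c ∧ g c (c.length - 1) ≠ .R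

lemma g_out {c : List Sym} {i : ℕ} (h : c.length ≤ i) : g c i = .H :=
  List.getD_eq_default _ _ h

lemma g_append_lt (c : List Sym) (x : Sym) {i : ℕ} (h : i < c.length) :
    g (c ++ [x]) i = g c i := List.getD_append _ _ _ _ h

lemma g_append_len (c : List Sym) (x : Sym) : g (c ++ [x]) c.length = x := by
  unfold g
  rw [List.getD_append_right _ _ _ _ (le_refl _), Nat.sub_self]
  rfl

lemma g_append_gt (c : List Sym) (x : Sym) {i : ℕ} (h : c.length < i) :
    g (c ++ [x]) i = .H := by
  apply g_out
  simp only [List.length_append, List.length_singleton]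
  omega

lemma noRL_append {c : List Sym} {x : Sym} (hc : 1 ≤ c.length) :
    NoRL (c ++ [x]) ↔ NoRL c ∧ ¬(g c (c.length - 1) = .R ∧ x = .L) := by
  constructor
  · intro h
    refine ⟨fun i hi => ?_, fun hi => ?_⟩
    · rcases Nat.lt_or_ge (i+1) c.length with h1 | h1
      · exact h i ⟨by rw [g_append_lt c x (by omega)]; exact hi.1,
          by rw [g_append_lt c x h1]; exact hi.2⟩
      · rcases Nat.lt_or_ge i c.length with h2 | h2
        · exact absurd hi.2 (by rw [g_out h1]; simp)
        · exact absurd hi.1 (by rw [g_out h2]; simp)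
    · exact h (c.length - 1) ⟨by rw [g_append_lt c x (by omega)]; exact hi.1,
        by rw [show c.length - 1 + 1 = c.length by omega, g_append_len]; exact hi.2⟩
  · rintro ⟨h1, h2⟩ i hi
    rcases Nat.lt_or_ge (i+1) c.length with hlt | hge
    · exact h1 i ⟨by rw [← g_append_lt c x (show i < c.length by omega)]; exact hi.1,
        by rw [← g_append_lt c x hlt]; exact hi.2⟩
    · rcases Nat.eq_or_lt_of_le hge with he | hgt
      · apply h2
        constructor
        · rw [show c.length - 1 = i by omega, ← g_append_lt c x (show i < c.length by omega)]
          exact hi.1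
        · have hx : g (c ++ [x]) (i+1) = x := by
            rw [he.symm]; exact g_append_len c x
          rw [← hx]; exact hi.2
      · have := hi.2
        rw [g_append_gt c x (by omega)] at this
        exact absurd this (by simp)

lemma okA_append {c : List Sym} {x : Sym} (hc : 1 ≤ c.length) :
    OkA (c ++ [x]) ↔ OkA c ∧ ¬(g c (c.length - 1) = .R ∧ x = .L) := by
  unfold OkA
  rw [g_append_lt c x (by omega), noRL_append hc]
  tauto

lemma ok_iff {c : List Sym} : Ok c ↔ OkA c ∧ g c (c.length - 1) ≠ .R := Iff.rfl

lemma ok_append {c : List Sym} {x : Sym} (hc : 1 ≤ c.length) :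
    Ok (c ++ [x]) ↔ OkA (c ++ [x]) ∧ x ≠ .R := by
  unfold Ok
  have : (c ++ [x]).length - 1 = c.length := by simp
  rw [this, g_append_len]

lemma okA_append_H {c : List Sym} (hc : 1 ≤ c.length) :
    OkA (c ++ [.H]) ↔ OkA c := by
  rw [okA_append hc]; simp

lemma okA_append_R {c : List Sym} (hc : 1 ≤ c.length) :
    OkA (c ++ [.R]) ↔ OkA c := by
  rw [okA_append hc]; simp

lemma okA_append_L {c : List Sym} (hc : 1 ≤ c.length) :
    OkA (c ++ [.L]) ↔ Ok c := by
  rw [okA_append hc]; unfold Ok; tauto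

lemma ok_append_H {c : List Sym} (hc : 1 ≤ c.length) :
    Ok (c ++ [.H]) ↔ OkA c := by
  rw [ok_append hc, okA_append_H hc]; simp

lemma ok_append_L {c : List Sym} (hc : 1 ≤ c.length) :
    Ok (c ++ [.L]) ↔ Ok c := by
  rw [ok_append hc, okA_append_L hc]; simp

lemma not_ok_append_R {c : List Sym} (hc : 1 ≤ c.length) :
    ¬ Ok (c ++ [.R]) := by
  rw [ok_append hc]; simp

/-- Differ in exactly one position. -/
def D (c c' : List Sym) : Prop :=
  c'.length = c.length ∧ ∃ i, i < c.length ∧ g c i ≠ g c' i ∧ ∀ j, j ≠ i → g c j = g c' j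

lemma D_symm {c c' : List Sym} (h : D c c') : D c' c := by
  obtain ⟨hl, i, hi, hne, hothers⟩ := h
  exact ⟨hl.symm, i, by omega, fun h => hne h.symm, fun j hj => (hothers j hj).symm⟩

lemma D_append {c c' : List Sym} (x : Sym) (h : D c c') : D (c ++ [x]) (c' ++ [x]) := by
  obtain ⟨hl, i, hi, hne, hothers⟩ := h
  refine ⟨by simp [hl], i, by simp; omega, ?_, ?_⟩
  · rwa [g_append_lt c x hi, g_append_lt c' x (by omega)]
  · intro j hj
    rcases Nat.lt_or_ge j c.length with h1 | h1
    · rw [g_append_lt c x h1, g_append_lt c' x (by omega)]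
      exact hothers j hj
    · rcases Nat.eq_or_lt_of_le h1 with he | hgt
      · have e1 : g (c ++ [x]) j = x := by rw [← he]; exact g_append_len c x
        have e2 : g (c' ++ [x]) j = x := by
          rw [show j = c'.length by omega]; exact g_append_len c' x
        rw [e1, e2]
      · rw [g_append_gt c x hgt, g_append_gt c' x (by omega)]

lemma D_last {c : List Sym} {x y : Sym} (h : x ≠ y) : D (c ++ [x]) (c ++ [y]) := by
  refine ⟨by simp, c.length, by simp, ?_, ?_⟩
  · rwa [g_append_len, g_append_len]
  · intro j hj
    rcases Nat.lt_or_ge j c.length with h1 | h1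
    · rw [g_append_lt c x h1, g_append_lt c y h1]
    · rw [g_append_gt c x (by omega), g_append_gt c y (by omega)]

end FanGray
namespace FanGray

open List

def stepAB (p : List (List Sym) × List (List Sym)) :
    List (List Sym) × List (List Sym) :=
  (p.1.reverse.map (· ++ [Sym.R]) ++ (p.1.map (· ++ [Sym.H]) ++ p.2.reverse.map (· ++ [Sym.L])),
   p.1.map (· ++ [Sym.H]) ++ p.2.reverse.map (· ++ [Sym.L]))

def AB : ℕ → List (List Sym) × List (List Sym)
  | 0 => ([], [])
  | 1 => ([[.R], [.H]], [[.H]])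
  | (m+2) => stepAB (AB (m+1))

lemma noRL_singleton (s : Sym) : NoRL [s] := by
  intro i hi
  rcases i with _ | i
  · exact absurd hi.2 (by simp [g])
  · exact absurd hi.1 (by
      have : g [s] (i+1) = .H := g_out (by simp)
      rw [this]; simp)

lemma g_singleton (s : Sym) : g [s] 0 = s := rfl

lemma okA_singleton {s : Sym} : OkA [s] ↔ s ≠ .L := by
  constructor
  · intro h; exact h.1
  · intro h; exact ⟨h, noRL_singleton s⟩

lemma ok_singleton {s : Sym} : Ok [s] ↔ s = .H := by
  unfold Ok
  rw [okA_singleton]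
  simp only [List.length_singleton, Nat.sub_self, g_singleton]
  cases s <;> simp

lemma mem_lastSym {l : List (List Sym)} {x : Sym} {c : List Sym}
    (h : c ∈ l.map (· ++ [x])) : c.getLast? = some x := by
  obtain ⟨d, _, rfl⟩ := List.mem_map.mp h
  exact List.getLast?_concat

theorem AB_spec : ∀ m, 1 ≤ m →
    ((AB m).1 ≠ [] ∧ (AB m).2 ≠ []) ∧
    ((AB m).1.getLast? = (AB m).2.getLast?) ∧
    (∀ c, c ∈ (AB m).1 ↔ (c.length = m ∧ OkA c)) ∧
    (∀ c, c ∈ (AB m).2 ↔ (c.length = m ∧ Ok c)) ∧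
    ((AB m).1.Nodup ∧ (AB m).2.Nodup) ∧
    (List.Chain' D (AB m).1 ∧ List.Chain' D (AB m).2) := by
  intro m hm'
  induction m, hm' using Nat.le_induction with
  | base =>
    refine ⟨⟨by simp [AB], by simp [AB]⟩, by simp [AB], ?_, ?_, ⟨by simp [AB], by simp [AB]⟩,
      ⟨?_, by simp [AB, List.Chain', List.isChain_singleton]⟩⟩
    · intro c
      show c ∈ [[Sym.R], [Sym.H]] ↔ _
      constructor
      · intro h
        rcases (by simpa using h : c = [Sym.R] ∨ c = [Sym.H]) with rfl | rfl
        · exact ⟨rfl, okA_singleton.mpr (by simp)⟩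
        · exact ⟨rfl, okA_singleton.mpr (by simp)⟩
      · rintro ⟨hlen, hok⟩
        obtain ⟨s, rfl⟩ := List.length_eq_one_iff.mp hlen
        have := okA_singleton.mp hok
        cases s
        · simp at this
        · simp
        · simp
    · intro c
      show c ∈ [[Sym.H]] ↔ _
      constructor
      · intro h
        have : c = [Sym.H] := by simpa using h
        subst this
        exact ⟨rfl, ok_singleton.mpr rfl⟩
      · rintro ⟨hlen, hok⟩
        obtain ⟨s, rfl⟩ := List.length_eq_one_iff.mp hlen
        have := ok_singleton.mp hok
        subst this; simp
    · show List.Chain' D [[Sym.R], [Sym.H]]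
      refine List.isChain_cons_cons.mpr ⟨?_, List.isChain_singleton _⟩
      exact (show D ([] ++ [Sym.R]) ([] ++ [Sym.H]) from D_last (by simp))
  | succ m hm IH =>
    obtain ⟨⟨hA, hB⟩, hlast, hmemA, hmemB, ⟨hndA, hndB⟩, hchA, hchB⟩ := IH
    have hABsucc : AB (m+1) = stepAB (AB m) := by
      rcases Nat.exists_eq_add_of_le hm with ⟨k, hk⟩
      subst hk
      rw [show 1 + k + 1 = k + 2 by omega, show 1 + k = k + 1 by omega]
      rfl
    set A := (AB m).1 with hAdef
    set B := (AB m).2 with hBdef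
    have lenA : ∀ c ∈ A, c.length = m := fun c hc => ((hmemA c).mp hc).1
    have lenB : ∀ c ∈ B, c.length = m := fun c hc => ((hmemB c).mp hc).1
    have okaA : ∀ c ∈ A, OkA c := fun c hc => ((hmemA c).mp hc).2
    have okB : ∀ c ∈ B, Ok c := fun c hc => ((hmemB c).mp hc).2
    -- the new B list
    have h2 : (AB (m+1)).2 = A.map (· ++ [Sym.H]) ++ B.reverse.map (· ++ [Sym.L]) := by
      rw [hABsucc]; rfl
    have h1 : (AB (m+1)).1 = A.reverse.map (· ++ [Sym.R]) ++ (AB (m+1)).2 := by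
      rw [hABsucc]; rfl
    have hB' : (AB (m+1)).2 ≠ [] := by
      rw [h2]
      simp only [ne_eq, List.append_eq_nil_iff, List.map_eq_nil_iff, not_and_or]
      exact Or.inl hA
    have hA' : (AB (m+1)).1 ≠ [] := by
      rw [h1]
      simp only [ne_eq, List.append_eq_nil_iff, not_and_or]
      exact Or.inr hB'
    -- memberships
    have memB' : ∀ c, c ∈ (AB (m+1)).2 ↔ (c.length = m + 1 ∧ Ok c) := by
      intro c
      rw [h2]
      simp only [List.mem_append, List.mem_map, List.mem_reverse]
      constructor
      · rintro (⟨d, hd, rfl⟩ | ⟨d, hd, rfl⟩)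
        · have hdm := lenA d hd
          refine ⟨by simp [hdm], (ok_append_H (by omega)).mpr (okaA d hd)⟩
        · have hdm := lenB d hd
          refine ⟨by simp [hdm], (ok_append_L (by omega)).mpr (okB d hd)⟩
      · rintro ⟨hlen, hok⟩
        have hcne : c ≠ [] := by intro h; rw [h] at hlen; simp at hlen
        obtain ⟨d, x, rfl⟩ : ∃ d x, c = d ++ [x] :=
          ⟨c.dropLast, c.getLast hcne, (List.dropLast_append_getLast hcne).symm⟩
        have hdm : d.length = m := by simp at hlen; omega
        cases x with
        | H => exact Or.inl ⟨d, (hmemA d).mpr ⟨hdm, (ok_append_H (by omega)).mp hok⟩, rfl⟩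
        | L => exact Or.inr ⟨d, (hmemB d).mpr ⟨hdm, (ok_append_L (by omega)).mp hok⟩, rfl⟩
        | R => exact absurd hok (not_ok_append_R (by omega))
    have memA' : ∀ c, c ∈ (AB (m+1)).1 ↔ (c.length = m + 1 ∧ OkA c) := by
      intro c
      rw [h1]
      simp only [List.mem_append, List.mem_map, List.mem_reverse]
      constructor
      · rintro (⟨d, hd, rfl⟩ | hc)
        · have hdm := lenA d hd
          refine ⟨by simp [hdm], (okA_append_R (by omega)).mpr (okaA d hd)⟩
        · have := (memB' c).mp hc
          exact ⟨this.1, this.2.1⟩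
      · rintro ⟨hlen, hok⟩
        have hcne : c ≠ [] := by intro h; rw [h] at hlen; simp at hlen
        obtain ⟨d, x, rfl⟩ : ∃ d x, c = d ++ [x] :=
          ⟨c.dropLast, c.getLast hcne, (List.dropLast_append_getLast hcne).symm⟩
        have hdm : d.length = m := by simp at hlen; omega
        cases x with
        | H =>
          exact Or.inr ((memB' _).mpr ⟨by simp [hdm], (ok_append_H (by omega)).mpr
              ((okA_append_H (by omega)).mp hok)⟩)
        | L =>
          exact Or.inr ((memB' _).mpr ⟨by simp [hdm], (ok_append_L (by omega)).mpr
              ((okA_append_L (by omega)).mp hok)⟩)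
        | R => exact Or.inl ⟨d, (hmemA d).mpr ⟨hdm, (okA_append_R (by omega)).mp hok⟩, rfl⟩
    -- nodups
    have injAppend : ∀ x : Sym, Function.Injective (· ++ [x] : List Sym → List Sym) :=
      fun x => List.append_left_injective [x]
    have ndB' : (AB (m+1)).2.Nodup := by
      rw [h2]
      refine List.Nodup.append ((List.nodup_map_iff (injAppend _)).mpr hndA)
        ((List.nodup_map_iff (injAppend _)).mpr (List.nodup_reverse.mpr hndB)) ?_
      intro c hc hc'
      have e1 := mem_lastSym hc
      have e2 := mem_lastSym hc'
      rw [e1] at e2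
      simp at e2
    have ndA' : (AB (m+1)).1.Nodup := by
      rw [h1]
      refine List.Nodup.append ((List.nodup_map_iff (injAppend _)).mpr
        (List.nodup_reverse.mpr hndA)) ndB' ?_
      intro c hc hc'
      have e1 := mem_lastSym hc
      rw [h2] at hc'
      rcases List.mem_append.mp hc' with h | h
      · have e2 := mem_lastSym h
        rw [e1] at e2; simp at e2
      · have e2 := mem_lastSym h
        rw [e1] at e2; simp at e2
    -- chains
    have chain_map : ∀ (x : Sym) (l : List (List Sym)), List.Chain' D l →
        List.Chain' D (l.map (· ++ [x])) := by
      intro x l hl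
      exact List.isChain_map_of_isChain _ (fun a b h => D_append x h) hl
    have chainArev : List.Chain' D A.reverse :=
      List.isChain_reverse.mpr (hchA.imp fun a b h => D_symm h)
    have chainBrev : List.Chain' D B.reverse :=
      List.isChain_reverse.mpr (hchB.imp fun a b h => D_symm h)
    obtain ⟨a0, ha0⟩ : ∃ a0, A.getLast? = some a0 := by
      cases h : A.getLast? with
      | none => exact absurd (List.getLast?_eq_none_iff.mp h) hA
      | some a => exact ⟨a, rfl⟩
    have hb0 : B.getLast? = some a0 := by rw [← hlast]; exact ha0
    obtain ⟨f0, hf0⟩ : ∃ f0, A.head? = some f0 := by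
      cases h : A.head? with
      | none => exact absurd (List.head?_eq_none_iff.mp h) hA
      | some a => exact ⟨a, rfl⟩
    have chB' : List.Chain' D (AB (m+1)).2 := by
      rw [h2]
      refine List.isChain_append.mpr ⟨chain_map _ _ hchA, chain_map _ _ chainBrev, ?_⟩
      intro x hx y hy
      rw [List.getLast?_map, ha0] at hx
      rw [List.head?_map, List.head?_reverse, hb0] at hy
      simp only [Option.map_some, Option.mem_def, Option.some.injEq] at hx hy
      subst hx; subst hy
      exact D_last (by simp)
    have chA' : List.Chain' D (AB (m+1)).1 := by
      rw [h1]
      refine List.isChain_append.mpr ⟨chain_map _ _ chainArev, chB', ?_⟩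
      intro x hx y hy
      rw [List.getLast?_map, List.getLast?_reverse, hf0] at hx
      rw [h2, List.head?_append_of_ne_nil _ (by simpa using hA), List.head?_map, hf0] at hy
      simp only [Option.map_some, Option.mem_def, Option.some.injEq] at hx hy
      subst hx; subst hy
      exact D_last (by simp)
    -- last equality
    have hlast' : (AB (m+1)).1.getLast? = (AB (m+1)).2.getLast? := by
      rw [h1]
      exact List.getLast?_append_of_ne_nil _ hB'
    exact ⟨⟨hA', hB'⟩, hlast', memA', memB', ⟨ndA', ndB'⟩, chA', chB'⟩

end FanGray
namespace FanGray

open SimpleGraph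

/-- parent of path vertex `j` (for `1 ≤ j ≤ c.length`). -/
def par (c : List Sym) (j : ℕ) : ℕ :=
  match g c (j-1) with
  | .H => 0
  | .L => j - 1
  | .R => j + 1

lemma par_eq_H {c : List Sym} {j : ℕ} (h : g c (j-1) = .H) : par c j = 0 := by
  unfold par; rw [h]

lemma par_eq_L {c : List Sym} {j : ℕ} (h : g c (j-1) = .L) : par c j = j - 1 := by
  unfold par; rw [h]

lemma par_eq_R {c : List Sym} {j : ℕ} (h : g c (j-1) = .R) : par c j = j + 1 := by
  unfold par; rw [h]

lemma par_mem (c : List Sym) (j : ℕ) :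
    par c j = 0 ∨ par c j = j - 1 ∨ par c j = j + 1 := by
  unfold par
  cases g c (j-1) <;> simp

lemma par_ne {c : List Sym} {j : ℕ} (hj : 1 ≤ j) : par c j ≠ j := by
  rcases par_mem c j with h | h | h <;> omega

lemma par_le {c : List Sym} (hc : Ok c) {j : ℕ} (hj1 : 1 ≤ j) (hj2 : j ≤ c.length) :
    par c j ≤ c.length := by
  cases hs : g c (j-1) with
  | H => rw [par_eq_H hs]; omega
  | L => rw [par_eq_L hs]; omega
  | R =>
    rw [par_eq_R hs]
    rcases Nat.eq_or_lt_of_le hj2 with he | hlt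
    · exact absurd (by rwa [he] at hs) hc.2
    · omega

lemma no2cycle {c : List Sym} (hc : Ok c) {j k : ℕ} (hj1 : 1 ≤ j) (hk1 : 1 ≤ k)
    (hjk : par c j = k) : par c k ≠ j := by
  intro hkj
  cases hs : g c (j-1) with
  | H => rw [par_eq_H hs] at hjk; omega
  | R =>
    rw [par_eq_R hs] at hjk
    cases hs2 : g c (k-1) with
    | H => rw [par_eq_H hs2] at hkj; omega
    | R => rw [par_eq_R hs2] at hkj; omega
    | L =>
      rw [par_eq_L hs2] at hkj
      refine hc.1.2 (j-1) ⟨hs, ?_⟩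
      rw [show j - 1 + 1 = j by omega]
      rw [show k - 1 = j by omega] at hs2
      exact hs2
  | L =>
    rw [par_eq_L hs] at hjk
    have hj2 : 2 ≤ j := by omega
    cases hs2 : g c (k-1) with
    | H => rw [par_eq_H hs2] at hkj; omega
    | L => rw [par_eq_L hs2] at hkj; omega
    | R =>
      refine hc.1.2 (k-1) ⟨hs2, ?_⟩
      rw [show k - 1 + 1 = j - 1 by omega]
      exact hs

/-- The graph encoded by a code `c` (intended: `c.length + 1 = n`). -/
def graphOf (n : ℕ) [NeZero n] (c : List Sym) : SimpleGraph (Fin n) :=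
  SimpleGraph.fromEdgeSet {e | ∃ j : Fin n, 1 ≤ (j : ℕ) ∧ e = s(j, ((par c (j : ℕ) : ℕ) : Fin n))}

lemma adj_iff {n : ℕ} [NeZero n] {c : List Sym} (hc : Ok c) (hn : c.length + 1 = n)
    {a b : Fin n} : (graphOf n c).Adj a b ↔
      ∃ j, 1 ≤ j ∧ j ≤ c.length ∧
        (((a : ℕ) = j ∧ (b : ℕ) = par c j) ∨ ((b : ℕ) = j ∧ (a : ℕ) = par c j)) := by
  rw [graphOf, SimpleGraph.fromEdgeSet_adj]
  constructor
  · rintro ⟨⟨jF, hj1, he⟩, hne⟩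
    refine ⟨(jF : ℕ), hj1, by omega, ?_⟩
    have hpar : ((par c (jF : ℕ) : ℕ) : Fin n) = ⟨par c (jF : ℕ), by
        have := par_le hc hj1 (by omega : (jF : ℕ) ≤ c.length); omega⟩ := by
      apply Fin.ext
      simp only [Fin.val_cast_of_lt (show par c (jF : ℕ) < n by
        have := par_le hc hj1 (by omega : (jF : ℕ) ≤ c.length); omega)]
    rw [hpar] at he
    rw [Sym2.eq_iff] at he
    rcases he with ⟨rfl, rfl⟩ | ⟨h1, h2⟩
    · exact Or.inl ⟨rfl, rfl⟩
    · exact Or.inr ⟨by rw [h2], by rw [h1]⟩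
  · rintro ⟨j, hj1, hj2, hab⟩
    have hjn : j < n := by omega
    have hpn : par c j < n := by have := par_le hc hj1 hj2; omega
    have hval : (((j : Fin n)) : ℕ) = j := Fin.val_cast_of_lt hjn
    refine ⟨⟨(j : Fin n), by rw [hval]; exact hj1, ?_⟩, ?_⟩
    · rcases hab with ⟨ha, hb⟩ | ⟨hb, ha⟩
      · have : a = (j : Fin n) := Fin.ext (by rw [hval]; exact ha)
        have hb' : b = ((par c ((j : Fin n) : ℕ) : ℕ) : Fin n) := by
          apply Fin.ext
          rw [hval, Fin.val_cast_of_lt hpn]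
          exact hb
        rw [this, hb']
      · have : b = (j : Fin n) := Fin.ext (by rw [hval]; exact hb)
        have ha' : a = ((par c ((j : Fin n) : ℕ) : ℕ) : Fin n) := by
          apply Fin.ext
          rw [hval, Fin.val_cast_of_lt hpn]
          exact ha
        rw [this, ha', Sym2.eq_swap]
    · intro hab'
      have := par_ne (c := c) hj1
      rcases hab with ⟨ha, hb⟩ | ⟨hb, ha⟩ <;>
        · rw [hab'] at ha
          omega

lemma fan_adj {n : ℕ} (a b : Fin n) :
    (fanGraph n).Adj a b ↔ a ≠ b ∧
      ((a : ℕ) = 0 ∨ (b : ℕ) = 0 ∨ (b : ℕ) = (a : ℕ) + 1 ∨ (a : ℕ) = (b : ℕ) + 1) := by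
  rw [fanGraph, SimpleGraph.fromRel_adj]
  refine and_congr_right fun _ => ?_
  omega

lemma graphOf_le_fan {n : ℕ} [NeZero n] {c : List Sym} (hc : Ok c) (hn : c.length + 1 = n) :
    graphOf n c ≤ fanGraph n := by
  intro a b hadj
  have hne := hadj.ne
  rw [adj_iff hc hn] at hadj
  rw [fan_adj]
  obtain ⟨j, hj1, hj2, hab⟩ := hadj
  refine ⟨hne, ?_⟩
  rcases par_mem c j with h | h | h <;> rcases hab with ⟨h1, h2⟩ | ⟨h1, h2⟩ <;> omega

/-- strong-induction principle along the parent function. -/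
lemma parRec {c : List Sym} (hc : Ok c) {Q : ℕ → Prop}
    (base : ∀ j, 1 ≤ j → j ≤ c.length → par c j = 0 → Q j)
    (step : ∀ j, 1 ≤ j → j ≤ c.length → 1 ≤ par c j → par c j ≤ c.length →
      Q (par c j) → Q j) :
    ∀ j, 1 ≤ j → j ≤ c.length → Q j := by
  set m := c.length with hm
  have main : ∀ N j, (if g c (j-1) = .R then m - j else j) ≤ N → 1 ≤ j → j ≤ m → Q j := by
    intro N
    induction N with
    | zero =>
      intro j hμ h1 h2
      cases hs : g c (j-1) with
      | H => rw [if_neg (by rw [hs]; simp)] at hμ; omega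
      | L => rw [if_neg (by rw [hs]; simp)] at hμ; omega
      | R =>
        rw [if_pos hs] at hμ
        have : j = m := by omega
        exact absurd (by rwa [this] at hs) hc.2
    | succ N IH =>
      intro j hμ h1 h2
      cases hs : g c (j-1) with
      | H => exact base j h1 h2 (par_eq_H hs)
      | R =>
        have hjm : j < m := by
          rcases Nat.eq_or_lt_of_le h2 with he | hlt
          · exact absurd (by rwa [he] at hs) hc.2
          · exact hlt
        have hpar : par c j = j + 1 := par_eq_R hs
        have hnotL : g c j ≠ .L := fun hL => hc.1.2 (j-1)
          ⟨hs, by rwa [show j - 1 + 1 = j by omega]⟩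
        refine step j h1 h2 (by omega) (by omega) ?_
        rw [hpar]
        cases hs2 : g c ((j+1)-1) with
        | H => exact base (j+1) (by omega) (by omega) (par_eq_H hs2)
        | L => exact absurd (by simpa using hs2) hnotL
        | R =>
          refine IH (j+1) ?_ (by omega) (by omega)
          rw [if_pos hs2]
          rw [if_pos hs] at hμ
          omega
      | L =>
        have hj2 : 2 ≤ j := by
          by_contra h
          have : j = 1 := by omega
          rw [this] at hs
          exact hc.1.1 (by simpa using hs)
        have hpar : par c j = j - 1 := par_eq_L hs
        have hnotR : g c (j-2) ≠ .R := fun hR => hc.1.2 (j-2)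
          ⟨hR, by rwa [show j - 2 + 1 = j - 1 by omega]⟩
        refine step j h1 h2 (by omega) (by omega) ?_
        rw [hpar]
        cases hs2 : g c ((j-1)-1) with
        | H => exact base (j-1) (by omega) (by omega) (par_eq_H hs2)
        | R => exact absurd (by rwa [show j - 1 - 1 = j - 2 by omega] at hs2) hnotR
        | L =>
          refine IH (j-1) ?_ (by omega) (by omega)
          rw [if_neg (by rw [hs2]; simp)]
          rw [if_neg (by rw [hs]; simp)] at hμ
          omega
  intro j h1 h2
  exact main ((if g c (j-1) = .R then m - j else j)) j le_rfl h1 h2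

lemma adj_par {n : ℕ} [NeZero n] {c : List Sym} (hc : Ok c) (hn : c.length + 1 = n)
    {j : ℕ} (hj1 : 1 ≤ j) (hj2 : j ≤ c.length) (h : j < n) (h' : par c j < n) :
    (graphOf n c).Adj ⟨j, h⟩ ⟨par c j, h'⟩ := by
  rw [adj_iff hc hn]
  exact ⟨j, hj1, hj2, Or.inl ⟨rfl, rfl⟩⟩

lemma reach_zero {n : ℕ} [NeZero n] {c : List Sym} (hc : Ok c) (hn : c.length + 1 = n)
    (a : Fin n) : (graphOf n c).Reachable a ⟨0, by omega⟩ := by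
  rcases Nat.eq_zero_or_pos (a : ℕ) with h0 | hpos
  · have : a = ⟨0, by omega⟩ := Fin.ext h0
    rw [this]
  · have key : ∀ j, 1 ≤ j → j ≤ c.length →
        (∀ hh : j < n, (graphOf n c).Reachable ⟨j, hh⟩ ⟨0, by omega⟩) := by
      refine parRec hc ?_ ?_
      · intro j h1 h2 hp hh
        have hadj := adj_par hc hn h1 h2 hh (by omega)
        refine (?_ : (graphOf n c).Adj ⟨j, hh⟩ ⟨0, by omega⟩).reachable
        convert hadj using 2
        exact hp.symm
      · intro j h1 h2 hp1 hp2 IH hh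
        exact ((adj_par hc hn h1 h2 hh (by omega)).reachable).trans (IH (by omega))
    have ha : a = ⟨(a : ℕ), a.isLt⟩ := Fin.ext rfl
    rw [ha]
    exact key (a : ℕ) hpos (by omega) a.isLt

lemma graphOf_connected {n : ℕ} [NeZero n] {c : List Sym} (hc : Ok c)
    (hn : c.length + 1 = n) : (graphOf n c).Connected := by
  rw [SimpleGraph.connected_iff]
  refine ⟨fun a b => (reach_zero hc hn a).trans (reach_zero hc hn b).symm, ⟨⟨0, by omega⟩⟩⟩

end FanGray
namespace FanGray

open SimpleGraph

/-- distance to the end of the `R`-run starting at `i`. -/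
def rise (c : List Sym) (i : ℕ) : ℕ :=
  Nat.find (⟨c.length, by rw [g_out (by omega)]; simp⟩ : ∃ t, g c (i + t) ≠ .R)

open Classical in
noncomputable def fall (c : List Sym) (i : ℕ) : ℕ :=
  if h : ∃ t, g c (i - t) ≠ .L then Nat.find h else 0

noncomputable def ht (c : List Sym) (j : ℕ) : ℕ :=
  if j = 0 then 0 else
    match g c (j-1) with
    | .H => 1
    | .R => rise c (j-1) + 1
    | .L => fall c (j-1) + 1

lemma ht_zero (c : List Sym) : ht c 0 = 0 := rfl

lemma ht_H {c : List Sym} {j : ℕ} (hj : j ≠ 0) (h : g c (j-1) = .H) : ht c j = 1 := by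
  unfold ht; rw [if_neg hj, h]

lemma ht_R {c : List Sym} {j : ℕ} (hj : j ≠ 0) (h : g c (j-1) = .R) :
    ht c j = rise c (j-1) + 1 := by
  unfold ht; rw [if_neg hj, h]

lemma ht_L {c : List Sym} {j : ℕ} (hj : j ≠ 0) (h : g c (j-1) = .L) :
    ht c j = fall c (j-1) + 1 := by
  unfold ht; rw [if_neg hj, h]

lemma rise_zero {c : List Sym} {i : ℕ} (h : g c i ≠ .R) : rise c i = 0 := by
  unfold rise
  rw [Nat.find_eq_zero]
  simpa using h

lemma rise_shift {c : List Sym} {i : ℕ} (h : g c i = .R) :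
    rise c i = rise c (i+1) + 1 := by
  unfold rise
  rw [Nat.find_eq_iff]
  constructor
  · have := Nat.find_spec (⟨c.length, by rw [g_out (by omega)]; simp⟩ :
      ∃ t, g c (i + 1 + t) ≠ .R)
    rwa [show i + 1 + Nat.find _ = i + (Nat.find _ + 1) by omega] at this
  · intro t ht'
    rcases t with _ | s
    · simpa using h
    · have := Nat.find_min (⟨c.length, by rw [g_out (by omega)]; simp⟩ :
        ∃ t, g c (i + 1 + t) ≠ .R) (show s < Nat.find _ by omega)
      rwa [show i + 1 + s = i + (s + 1) by omega] at this

lemma fall_zero {c : List Sym} {i : ℕ} (h : g c i ≠ .L) : fall c i = 0 := by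
  unfold fall
  rw [dif_pos ⟨0, by simpa using h⟩, Nat.find_eq_zero]
  simpa using h

lemma fall_shift {c : List Sym} (hc : g c 0 ≠ .L) {i : ℕ} (hi : 1 ≤ i)
    (h : g c i = .L) : fall c i = fall c (i-1) + 1 := by
  have hex : ∃ t, g c (i - t) ≠ .L := ⟨i, by simpa using hc⟩
  have hex' : ∃ t, g c (i - 1 - t) ≠ .L := ⟨i - 1, by simpa using hc⟩
  unfold fall
  rw [dif_pos hex, dif_pos hex', Nat.find_eq_iff]
  constructor
  · have := Nat.find_spec hex'
    rwa [show i - 1 - Nat.find hex' = i - (Nat.find hex' + 1) by omega] at this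
  · intro t ht'
    rcases t with _ | s
    · simpa using h
    · have := Nat.find_min hex' (show s < Nat.find hex' by omega)
      rwa [show i - 1 - s = i - (s + 1) by omega] at this

lemma ht_par {c : List Sym} (hc : Ok c) {j : ℕ} (h1 : 1 ≤ j) (h2 : j ≤ c.length) :
    ht c j = ht c (par c j) + 1 := by
  cases hs : g c (j-1) with
  | H => rw [ht_H (by omega) hs, par_eq_H hs, ht_zero]
  | R =>
    have hjm : j < c.length := by
      rcases Nat.eq_or_lt_of_le h2 with he | hlt
      · exact absurd (by rwa [he] at hs) hc.2
      · exact hlt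
    rw [ht_R (by omega) hs, par_eq_R hs]
    have hnotL : g c j ≠ .L := fun hL => hc.1.2 (j-1)
      ⟨hs, by rwa [show j - 1 + 1 = j by omega]⟩
    have hshift : rise c (j-1) = rise c j + 1 := by
      have := rise_shift hs
      rwa [show j - 1 + 1 = j by omega] at this
    cases hs2 : g c j with
    | H =>
      rw [ht_H (by omega) (by rwa [show j + 1 - 1 = j by omega]), hshift,
        rise_zero (by rw [hs2]; simp)]
    | L => exact absurd hs2 hnotL
    | R =>
      rw [ht_R (by omega) (by rwa [show j + 1 - 1 = j by omega]), hshift,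
        show j + 1 - 1 = j by omega]
  | L =>
    have hj2 : 2 ≤ j := by
      by_contra h
      have : j = 1 := by omega
      rw [this] at hs
      exact hc.1.1 (by simpa using hs)
    rw [ht_L (by omega) hs, par_eq_L hs]
    have hnotR : g c (j-2) ≠ .R := fun hR => hc.1.2 (j-2)
      ⟨hR, by rwa [show j - 2 + 1 = j - 1 by omega]⟩
    have hshift : fall c (j-1) = fall c (j-2) + 1 := by
      have := fall_shift hc.1.1 (show 1 ≤ j - 1 by omega) hs
      rwa [show j - 1 - 1 = j - 2 by omega] at this
    cases hs2 : g c (j-2) with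
    | H =>
      rw [ht_H (by omega) (by rwa [show j - 1 - 1 = j - 2 by omega]), hshift,
        fall_zero (by rw [hs2]; simp)]
    | R => exact absurd hs2 hnotR
    | L =>
      rw [ht_L (by omega) (by rwa [show j - 1 - 1 = j - 2 by omega]), hshift,
        show j - 1 - 1 = j - 2 by omega]

/-- a neighbour of `a` whose height is not larger must be the parent of `a`. -/
lemma neighbor_eq_par {n : ℕ} [NeZero n] {c : List Sym} (hc : Ok c)
    (hn : c.length + 1 = n) {a b : Fin n} (hadj : (graphOf n c).Adj a b)
    (hle : ht c (b : ℕ) ≤ ht c (a : ℕ)) : (b : ℕ) = par c (a : ℕ) := by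
  rw [adj_iff hc hn] at hadj
  obtain ⟨j, hj1, hj2, hab⟩ := hadj
  rcases hab with ⟨ha, hb⟩ | ⟨hb, ha⟩
  · rw [ha, hb]
  · exfalso
    have h1' := ht_par hc hj1 hj2
    rw [← ha] at h1'
    rw [← hb] at h1'
    omega

lemma path_getVert_inj {V : Type*} {G : SimpleGraph V} {u v : V} {p : G.Walk u v}
    (hp : p.IsPath) : ∀ {i j : ℕ}, i ≤ p.length → j ≤ p.length →
      p.getVert i = p.getVert j → i = j := by
  induction p with
  | nil => intro i j hi hj _; simp at hi hj; omega
  | @cons a b w hadj q IH =>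
    intro i j hi hj hij
    rw [SimpleGraph.Walk.cons_isPath_iff] at hp
    rcases i with _ | i <;> rcases j with _ | j
    · rfl
    · exfalso
      rw [SimpleGraph.Walk.getVert_zero, SimpleGraph.Walk.getVert_cons_succ] at hij
      exact hp.2 (SimpleGraph.Walk.mem_support_iff_exists_getVert.mpr
        ⟨j, hij.symm, by simpa using hj⟩)
    · exfalso
      rw [SimpleGraph.Walk.getVert_zero, SimpleGraph.Walk.getVert_cons_succ] at hij
      exact hp.2 (SimpleGraph.Walk.mem_support_iff_exists_getVert.mpr
        ⟨i, hij, by simpa using hi⟩)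
    · rw [SimpleGraph.Walk.getVert_cons_succ, SimpleGraph.Walk.getVert_cons_succ] at hij
      have := IH hp.1 (by simpa using hi) (by simpa using hj) hij
      omega

lemma graphOf_acyclic {n : ℕ} [NeZero n] {c : List Sym} (hc : Ok c)
    (hn : c.length + 1 = n) : (graphOf n c).IsAcyclic := by
  intro v w hcyc
  classical
  -- maximal-height vertex on the cycle
  obtain ⟨v0, hv0mem', hv0max'⟩ := Finset.exists_max_image w.support.toFinset
    (fun x => ht c (x : ℕ)) ⟨v, by simp [SimpleGraph.Walk.start_mem_support]⟩
  rw [List.mem_toFinset] at hv0mem'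
  have hv0max : ∀ x ∈ w.support, ht c (x : ℕ) ≤ ht c (v0 : ℕ) := fun x hx =>
    hv0max' x (List.mem_toFinset.mpr hx)
  set w' := w.rotate v0 hv0mem' with hw'
  have hcyc' : w'.IsCycle := hcyc.rotate hv0mem'
  have hsupp : ∀ x, x ∈ w'.support → x ∈ w.support := by
    intro x hx
    rw [SimpleGraph.Walk.support_eq_cons] at hx
    rcases List.mem_cons.mp hx with rfl | hx
    · exact hv0mem'
    · have hrot := SimpleGraph.Walk.support_rotate w v0 hv0mem'
      have : x ∈ w.support.tail := (hrot.mem_iff).mp hx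
      rw [SimpleGraph.Walk.support_eq_cons w]
      exact List.mem_cons_of_mem _ this
  -- decompose the rotated cycle
  obtain ⟨u', hadj1, p, hw''⟩ := SimpleGraph.Walk.not_nil_iff.mp hcyc'.not_nil
  rw [hw''] at hcyc'
  have hpp := (SimpleGraph.Walk.cons_isCycle_iff p hadj1).mp hcyc'
  have hpath : p.IsPath := hpp.1
  have hplen : 2 ≤ p.length := by
    have h3 := hcyc'.three_le_length
    simp only [SimpleGraph.Walk.length_cons] at h3
    omega
  -- the other neighbour of v0 on the cycle
  set w0 := p.getVert (p.length - 1) with hw0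
  have hrevnil : ¬ p.reverse.Nil := by
    rw [SimpleGraph.Walk.nil_iff_length_eq]
    rw [SimpleGraph.Walk.length_reverse]
    omega
  have hadj2 : (graphOf n c).Adj v0 w0 := by
    have := SimpleGraph.Walk.adj_snd hrevnil
    unfold SimpleGraph.Walk.snd at this
    rw [SimpleGraph.Walk.getVert_reverse] at this
    exact this
  have hne : u' ≠ w0 := by
    intro h
    have := path_getVert_inj hpath (show 0 ≤ p.length by omega)
      (show p.length - 1 ≤ p.length by omega)
      (by rw [SimpleGraph.Walk.getVert_zero, ← hw0, ← h])
    omega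
  have hu'mem : u' ∈ w.support := hsupp u' (by
    rw [hw'', SimpleGraph.Walk.support_cons]
    exact List.mem_cons_of_mem _ p.start_mem_support)
  have hw0mem : w0 ∈ w.support := hsupp w0 (by
    rw [hw'', SimpleGraph.Walk.support_cons]
    refine List.mem_cons_of_mem _ ?_
    exact SimpleGraph.Walk.mem_support_iff_exists_getVert.mpr ⟨p.length - 1, rfl, by omega⟩)
  have e1 : (u' : ℕ) = par c (v0 : ℕ) :=
    neighbor_eq_par hc hn hadj1 (hv0max u' hu'mem)
  have e2 : (w0 : ℕ) = par c (v0 : ℕ) :=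
    neighbor_eq_par hc hn hadj2 (hv0max w0 hw0mem)
  exact hne (Fin.ext (by rw [e1, e2]))

lemma graphOf_isTree {n : ℕ} [NeZero n] {c : List Sym} (hc : Ok c)
    (hn : c.length + 1 = n) : (graphOf n c).IsTree :=
  ⟨graphOf_connected hc hn, graphOf_acyclic hc hn⟩

end FanGray
namespace FanGray

open SimpleGraph

variable {n : ℕ}

open Classical in
noncomputable def tpar [NeZero n] (G : SimpleGraph (Fin n)) (j : Fin n) : Fin n :=
  if h : ∃ p : G.Walk j 0, p.IsPath then h.choose.getVert 1 else j

lemma tpar_eq [NeZero n] {G : SimpleGraph (Fin n)} (hG : G.IsTree) {j : Fin n}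
    (q : G.Walk j 0) (hq : q.IsPath) : tpar G j = q.getVert 1 := by
  have hex : ∃ p : G.Walk j 0, p.IsPath := ⟨q, hq⟩
  rw [tpar, dif_pos hex]
  have := (hG.existsUnique_path j 0).unique hex.choose_spec hq
  rw [this]

lemma tpar_zero [NeZero n] {G : SimpleGraph (Fin n)} (hG : G.IsTree) :
    tpar G (0 : Fin n) = 0 := by
  rw [tpar_eq hG Walk.nil Walk.IsPath.nil]
  rfl

open Classical in
noncomputable def pl [NeZero n] (G : SimpleGraph (Fin n)) (j : Fin n) : ℕ :=
  if h : ∃ p : G.Walk j 0, p.IsPath then h.choose.length else 0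

lemma pl_eq [NeZero n] {G : SimpleGraph (Fin n)} (hG : G.IsTree) {j : Fin n}
    (q : G.Walk j 0) (hq : q.IsPath) : pl G j = q.length := by
  have hex : ∃ p : G.Walk j 0, p.IsPath := ⟨q, hq⟩
  rw [pl, dif_pos hex]
  have := (hG.existsUnique_path j 0).unique hex.choose_spec hq
  rw [this]

lemma tpar_pl [NeZero n] {G : SimpleGraph (Fin n)} (hG : G.IsTree) {j : Fin n}
    (hj : j ≠ 0) : pl G (tpar G j) + 1 = pl G j := by
  obtain ⟨q, hq, -⟩ := hG.existsUnique_path j 0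
  have hnil : ¬ q.Nil := Walk.not_nil_of_ne hj
  have htl : q.tail.IsPath := hq.tail
  have h1 : tpar G j = q.getVert 1 := tpar_eq hG q hq
  have h2 : pl G j = q.length := pl_eq hG q hq
  have h3 : pl G (q.getVert 1) = q.tail.length := pl_eq hG q.tail htl
  rw [h1, h3, h2]
  exact Walk.length_tail_add_one hnil

lemma tpar_no2 [NeZero n] {G : SimpleGraph (Fin n)} (hG : G.IsTree) {j : Fin n}
    (hj : j ≠ 0) (hj2 : tpar G j ≠ 0) : tpar G (tpar G j) ≠ j := by
  intro h
  have e1 := tpar_pl hG hj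
  have e2 := tpar_pl hG hj2
  rw [h] at e2
  omega

lemma tpar_edge [NeZero n] {G : SimpleGraph (Fin n)} (hG : G.IsTree) {a b : Fin n}
    (hadj : G.Adj a b) : tpar G a = b ∨ tpar G b = a := by
  classical
  by_cases hb0 : b = 0
  · subst hb0
    left
    rw [tpar_eq hG (Walk.cons hadj Walk.nil)
      (Walk.IsPath.nil.cons (by simpa using hadj.ne))]
    rfl
  · by_cases ha0 : a = 0
    · subst ha0
      right
      rw [tpar_eq hG (Walk.cons hadj.symm Walk.nil)
        (Walk.IsPath.nil.cons (by simpa using hadj.ne'))]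
      rfl
    · obtain ⟨q, hq, -⟩ := hG.existsUnique_path b 0
      by_cases hmem : a ∈ q.support
      · right
        have htu : (q.takeUntil a hmem).IsPath := hq.takeUntil hmem
        have hsingle : q.takeUntil a hmem = Walk.cons hadj.symm Walk.nil :=
          (hG.existsUnique_path b a).unique htu
            (Walk.IsPath.nil.cons (by simpa using hadj.ne'))
        have hspec := q.take_spec hmem
        have : tpar G b = q.getVert 1 := tpar_eq hG q hq
        rw [this, ← hspec, hsingle]
        rw [Walk.getVert_append]
        simp
      · left
        have hcons : (Walk.cons hadj q).IsPath := hq.cons hmem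
        rw [tpar_eq hG (Walk.cons hadj q) hcons]
        simp [Walk.getVert_cons_succ]

lemma tpar_adj [NeZero n] {G : SimpleGraph (Fin n)} (hG : G.IsTree) {j : Fin n}
    (hj : j ≠ 0) : G.Adj j (tpar G j) := by
  obtain ⟨q, hq, -⟩ := hG.existsUnique_path j 0
  have hnil : ¬ q.Nil := Walk.not_nil_of_ne hj
  rw [tpar_eq hG q hq]
  exact Walk.adj_snd hnil

/-- For the graph of a valid code, the tree-parent agrees with the code parent. -/
lemma tpar_graphOf [NeZero n] {c : List Sym} (hc : Ok c) (hn : c.length + 1 = n) :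
    ∀ j, 1 ≤ j → j ≤ c.length →
      ∀ h : j < n, ((tpar (graphOf n c) ⟨j, h⟩ : Fin n) : ℕ) = par c j := by
  have hG := graphOf_isTree hc hn
  refine parRec hc ?_ ?_
  · intro j h1 h2 hp h
    have hadj : (graphOf n c).Adj ⟨j, h⟩ (0 : Fin n) := by
      have hadj' := adj_par hc hn h1 h2 h (by omega)
      have : (⟨par c j, by omega⟩ : Fin n) = (0 : Fin n) := by
        apply Fin.ext
        simp [hp]
      rwa [this] at hadj'
    rcases tpar_edge hG hadj with he | he
    · rw [he, hp]
      simp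
    · exfalso
      rw [tpar_zero hG] at he
      have := congrArg Fin.val he
      simp at this
      omega
  · intro j h1 h2 hp1 hp2 IH h
    have hadj := adj_par hc hn h1 h2 h (by omega)
    rcases tpar_edge hG hadj with he | he
    · rw [he]
    · exfalso
      have hIH := IH (by omega)
      have hne := no2cycle hc h1 hp1 (rfl : par c j = par c j)
      have := congrArg Fin.val he
      simp only at this
      rw [hIH] at this
      omega

lemma sym_of_par {c : List Sym} (hc : Ok c) {j : ℕ} (hj : 1 ≤ j) :
    g c (j-1) = if par c j = 0 then Sym.H else if par c j = j+1 then Sym.R else Sym.L := by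
  cases hs : g c (j-1) with
  | H => rw [par_eq_H hs, if_pos rfl]
  | R => rw [par_eq_R hs, if_neg (by omega), if_pos rfl]
  | L =>
    have hj2 : 2 ≤ j := by
      by_contra h
      have : j = 1 := by omega
      rw [this] at hs
      exact hc.1.1 (by simpa using hs)
    rw [par_eq_L hs, if_neg (by omega), if_neg (by omega)]

lemma graphOf_inj [NeZero n] {c c' : List Sym} (hc : Ok c) (hc' : Ok c')
    (hn : c.length + 1 = n) (hn' : c'.length + 1 = n)
    (heq : graphOf n c = graphOf n c') : c = c' := by
  have hlen : c.length = c'.length := by omega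
  have hpar : ∀ j, 1 ≤ j → j ≤ c.length → par c j = par c' j := by
    intro j h1 h2
    have e1 := tpar_graphOf hc hn j h1 h2 (by omega)
    have e2 := tpar_graphOf hc' hn' j h1 (by omega) (by omega)
    rw [← e1, ← e2, heq]
  apply List.ext_getElem hlen
  intro i hi hi'
  have h1 : g c i = g c' i := by
    have hj1 : 1 ≤ i + 1 := by omega
    have := sym_of_par hc (j := i+1) hj1
    have h2' := sym_of_par hc' (j := i+1) hj1
    rw [show i + 1 - 1 = i by omega] at this h2'
    rw [this, h2', hpar (i+1) hj1 (by omega)]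
  rw [g, g, List.getD_eq_getElem c _ hi, List.getD_eq_getElem c' _ hi'] at h1
  exact h1

end FanGray
namespace FanGray

open SimpleGraph

variable {n : ℕ}

open Classical in
noncomputable def symOf [NeZero n] (H : SimpleGraph (Fin n)) (j : ℕ) : Sym :=
  if ((tpar H (j : Fin n)) : ℕ) = 0 then .H
  else if ((tpar H (j : Fin n)) : ℕ) = j + 1 then .R
  else .L

noncomputable def codeOf (n : ℕ) [NeZero n] (H : SimpleGraph (Fin n)) : List Sym :=
  (List.range (n-1)).map (fun i => symOf H (i+1))

lemma codeOf_length [NeZero n] (H : SimpleGraph (Fin n)) :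
    (codeOf n H).length = n - 1 := by simp [codeOf]

lemma g_codeOf [NeZero n] (H : SimpleGraph (Fin n)) {i : ℕ} (hi : i < n - 1) :
    g (codeOf n H) i = symOf H (i+1) := by
  unfold g codeOf
  rw [List.getD_eq_getElem _ _ (by simpa using hi)]
  simp

lemma fin_ne_zero_of_val [NeZero n] {j : Fin n} (h : (j : ℕ) ≠ 0) : j ≠ 0 := by
  intro he
  apply h
  rw [he]
  simp

lemma tpar_val_mem [NeZero n] {H : SimpleGraph (Fin n)} (hH : H ≤ fanGraph n)
    (hT : H.IsTree) {j : Fin n} (hj : (j : ℕ) ≠ 0) :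
    ((tpar H j : Fin n) : ℕ) = 0 ∨ ((tpar H j : Fin n) : ℕ) = (j : ℕ) - 1 ∨
      ((tpar H j : Fin n) : ℕ) = (j : ℕ) + 1 := by
  have hadj := tpar_adj hT (fin_ne_zero_of_val hj)
  have := hH hadj
  rw [fan_adj] at this
  obtain ⟨-, hvals⟩ := this
  omega

lemma par_codeOf [NeZero n] {H : SimpleGraph (Fin n)} (hH : H ≤ fanGraph n)
    (hT : H.IsTree) {j : ℕ} (h1 : 1 ≤ j) (h2 : j ≤ n - 1) :
    par (codeOf n H) j = ((tpar H (j : Fin n)) : ℕ) := by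
  have hjlt : j < n := by omega
  have hval : ((j : Fin n) : ℕ) = j := Fin.val_cast_of_lt hjlt
  have hg : g (codeOf n H) (j-1) = symOf H j := by
    rw [g_codeOf H (by omega), show j - 1 + 1 = j by omega]
  have htmem := tpar_val_mem hH hT (j := (j : Fin n)) (by omega)
  rw [hval] at htmem
  by_cases h0 : ((tpar H (j : Fin n)) : ℕ) = 0
  · have hsym : symOf H j = .H := by rw [symOf, if_pos h0]
    rw [par_eq_H (hg.trans hsym), h0]
  · by_cases hR : ((tpar H (j : Fin n)) : ℕ) = j + 1
    · have hsym : symOf H j = .R := by rw [symOf, if_neg h0, if_pos hR]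
      rw [par_eq_R (hg.trans hsym), hR]
    · have hsym : symOf H j = .L := by rw [symOf, if_neg h0, if_neg hR]
      rw [par_eq_L (hg.trans hsym)]
      omega

lemma symOf_eq_R [NeZero n] {H : SimpleGraph (Fin n)} {j : ℕ} (h : symOf H j = .R) :
    ((tpar H (j : Fin n)) : ℕ) = j + 1 := by
  by_cases h0 : ((tpar H (j : Fin n)) : ℕ) = 0
  · rw [symOf, if_pos h0] at h; cases h
  · by_cases h1 : ((tpar H (j : Fin n)) : ℕ) = j + 1
    · exact h1
    · rw [symOf, if_neg h0, if_neg h1] at h; cases h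

lemma symOf_eq_L [NeZero n] {H : SimpleGraph (Fin n)} {j : ℕ} (h : symOf H j = .L) :
    ((tpar H (j : Fin n)) : ℕ) ≠ 0 ∧ ((tpar H (j : Fin n)) : ℕ) ≠ j + 1 := by
  by_cases h0 : ((tpar H (j : Fin n)) : ℕ) = 0
  · rw [symOf, if_pos h0] at h; cases h
  · by_cases h1 : ((tpar H (j : Fin n)) : ℕ) = j + 1
    · rw [symOf, if_neg h0, if_pos h1] at h; cases h
    · exact ⟨h0, h1⟩

lemma fin_eq_zero_of_val [NeZero n] {j : Fin n} (h : (j : ℕ) = 0) : j = (0 : Fin n) := by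
  apply Fin.ext
  rw [h]
  simp

lemma ok_codeOf [NeZero n] (hn2 : 2 ≤ n) {H : SimpleGraph (Fin n)}
    (hH : H ≤ fanGraph n) (hT : H.IsTree) : Ok (codeOf n H) := by
  have hfirst : g (codeOf n H) 0 ≠ .L := by
    intro hL
    rw [g_codeOf H (by omega)] at hL
    have htL := symOf_eq_L hL
    have htmem := tpar_val_mem hH hT (j := ((0+1 : ℕ) : Fin n))
      (by rw [Fin.val_cast_of_lt (by omega)]; omega)
    rw [Fin.val_cast_of_lt (show 0 + 1 < n by omega)] at htmem
    omega
  have hlastne : g (codeOf n H) ((codeOf n H).length - 1) ≠ .R := by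
    intro hR
    rw [codeOf_length] at hR
    rw [g_codeOf H (by omega), show n - 1 - 1 + 1 = n - 1 by omega] at hR
    have ht := symOf_eq_R hR
    have := (tpar H (((n-1 : ℕ)) : Fin n)).isLt
    omega
  refine ⟨⟨hfirst, ?_⟩, hlastne⟩
  intro i hi
  obtain ⟨hiR, hiL⟩ := hi
  rcases Nat.lt_or_ge (i+1) (n-1) with hlt | hge
  · rw [g_codeOf H (by omega)] at hiR
    rw [g_codeOf H hlt] at hiL
    have ht1 := symOf_eq_R hiR
    have ht2 := symOf_eq_L hiL
    have htmem := tpar_val_mem hH hT (j := (((i+1+1 : ℕ)) : Fin n))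
      (by rw [Fin.val_cast_of_lt (by omega)]; omega)
    rw [Fin.val_cast_of_lt (show i + 1 + 1 < n by omega)] at htmem
    have ht2' : ((tpar H (((i+1+1 : ℕ)) : Fin n)) : ℕ) = i + 1 := by omega
    have e1 : tpar H (((i+1 : ℕ)) : Fin n) = (((i+1+1 : ℕ)) : Fin n) := by
      apply Fin.ext
      rw [ht1, Fin.val_cast_of_lt (show i + 1 + 1 < n by omega)]
    have e2 : tpar H (((i+1+1 : ℕ)) : Fin n) = (((i+1 : ℕ)) : Fin n) := by
      apply Fin.ext
      rw [ht2', Fin.val_cast_of_lt (show i + 1 < n by omega)]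
    have hno2 := tpar_no2 hT (j := (((i+1 : ℕ)) : Fin n))
      (fin_ne_zero_of_val (by rw [Fin.val_cast_of_lt (show i + 1 < n by omega)]; omega))
      (by
        rw [e1]
        exact fin_ne_zero_of_val
          (by rw [Fin.val_cast_of_lt (show i + 1 + 1 < n by omega)]; omega))
    rw [e1, e2] at hno2
    exact hno2 rfl
  · rw [g_out (by rw [codeOf_length]; omega)] at hiL
    exact absurd hiL (by simp)

lemma graphOf_codeOf [NeZero n] (hn2 : 2 ≤ n) {H : SimpleGraph (Fin n)}
    (hH : H ≤ fanGraph n) (hT : H.IsTree) : graphOf n (codeOf n H) = H := by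
  have hc := ok_codeOf hn2 hH hT
  have hlen : (codeOf n H).length + 1 = n := by rw [codeOf_length]; omega
  ext a b
  rw [adj_iff hc hlen, codeOf_length]
  constructor
  · rintro ⟨j, hj1, hj2, hab⟩
    have hjlt : j < n := by omega
    have hvj : ((j : Fin n) : ℕ) = j := Fin.val_cast_of_lt hjlt
    have hadj := tpar_adj hT (j := (j : Fin n)) (fin_ne_zero_of_val (by omega))
    have hpar := par_codeOf hH hT hj1 hj2
    rcases hab with ⟨ha, hb⟩ | ⟨hb, ha⟩
    · have ea : a = (j : Fin n) := Fin.ext (by rw [hvj]; exact ha)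
      have eb : b = tpar H (j : Fin n) := Fin.ext (by rw [← hpar]; exact hb)
      rw [ea, eb]; exact hadj
    · have eb : b = (j : Fin n) := Fin.ext (by rw [hvj]; exact hb)
      have ea : a = tpar H (j : Fin n) := Fin.ext (by rw [← hpar]; exact ha)
      rw [ea, eb]; exact hadj.symm
  · intro hadj
    have hne : (a : ℕ) ≠ (b : ℕ) := fun h => hadj.ne (Fin.ext h)
    by_cases hb0 : (b : ℕ) = 0
    · have ha0 : (a : ℕ) ≠ 0 := by omega
      refine ⟨(a : ℕ), by omega, by have := a.isLt; omega, Or.inl ⟨rfl, ?_⟩⟩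
      rcases tpar_edge hT hadj with he | he
      · rw [par_codeOf hH hT (by omega) (by have := a.isLt; omega),
          Fin.cast_val_eq_self a, he, hb0]
      · exfalso
        have hbz : b = (0 : Fin n) := fin_eq_zero_of_val hb0
        rw [hbz, tpar_zero hT] at he
        exact ha0 (by rw [← he]; simp)
    · by_cases ha0 : (a : ℕ) = 0
      · refine ⟨(b : ℕ), by omega, by have := b.isLt; omega, Or.inr ⟨rfl, ?_⟩⟩
        rcases tpar_edge hT hadj with he | he
        · exfalso
          have haz : a = (0 : Fin n) := fin_eq_zero_of_val ha0
          rw [haz, tpar_zero hT] at he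
          exact hb0 (by rw [← he]; simp)
        · rw [par_codeOf hH hT (by omega) (by have := b.isLt; omega),
            Fin.cast_val_eq_self b, he]
      · rcases tpar_edge hT hadj with he | he
        · refine ⟨(a : ℕ), by omega, by have := a.isLt; omega, Or.inl ⟨rfl, ?_⟩⟩
          rw [par_codeOf hH hT (by omega) (by have := a.isLt; omega),
            Fin.cast_val_eq_self a, he]
        · refine ⟨(b : ℕ), by omega, by have := b.isLt; omega, Or.inr ⟨rfl, ?_⟩⟩
          rw [par_codeOf hH hT (by omega) (by have := b.isLt; omega),
            Fin.cast_val_eq_self b, he]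

end FanGray
namespace FanGray

open SimpleGraph

variable {n : ℕ}

lemma par_eq_succ {c : List Sym} {j : ℕ} (h : par c j = j + 1) : g c (j-1) = .R := by
  cases hs : g c (j-1) with
  | H => rw [par_eq_H hs] at h; omega
  | L => rw [par_eq_L hs] at h; omega
  | R => rfl

lemma par_eq_pred {c : List Sym} {j : ℕ} (h2 : 2 ≤ j) (h : par c j = j - 1) :
    g c (j-1) = .L := by
  cases hs : g c (j-1) with
  | H => rw [par_eq_H hs] at h; omega
  | R => rw [par_eq_R hs] at h; omega
  | L => rfl

lemma gray_step [NeZero n] {c c' : List Sym} (hc : Ok c) (hc' : Ok c')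
    (hn : c.length + 1 = n) (hn' : c'.length + 1 = n) (hD : D c c') :
    ∃ u v w : Fin n, (graphOf n c).Adj u v ∧ ¬ (graphOf n c).Adj u w ∧
      graphOf n c' = ((graphOf n c).deleteEdges {s(u,v)}) ⊔
        SimpleGraph.fromEdgeSet {s(u,w)} := by
  obtain ⟨hlen, i, hi, hne, hoth⟩ := hD
  have hu1 : 1 ≤ i + 1 := by omega
  have hum : i + 1 ≤ c.length := by omega
  have hum' : i + 1 ≤ c'.length := by omega
  have hvle : par c (i+1) ≤ c.length := par_le hc hu1 hum
  have hwle : par c' (i+1) ≤ c'.length := par_le hc' hu1 hum'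
  have hparag : ∀ j, 1 ≤ j → j ≠ i + 1 → par c j = par c' j := by
    intro j hj1' hj
    unfold par
    rw [hoth (j-1) (by omega)]
  have hi0 : g c' 0 ≠ .L := hc'.1.1
  have hc0 : g c 0 ≠ .L := hc.1.1
  have hgu : g c (i + 1 - 1) = g c i := by rw [show i + 1 - 1 = i by omega]
  have hgu' : g c' (i + 1 - 1) = g c' i := by rw [show i + 1 - 1 = i by omega]
  have hvw : par c (i+1) ≠ par c' (i+1) := by
    cases h1 : g c i with
    | H =>
      have e1 : par c (i+1) = 0 := par_eq_H (by rw [hgu]; exact h1)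
      cases h2 : g c' i with
      | H => exact absurd (h1.trans h2.symm) hne
      | L =>
        have hi1 : i ≠ 0 := fun h0 => hi0 (by rw [← h0]; exact h2)
        have e2 : par c' (i+1) = i + 1 - 1 := par_eq_L (by rw [hgu']; exact h2)
        omega
      | R =>
        have e2 : par c' (i+1) = i + 1 + 1 := par_eq_R (by rw [hgu']; exact h2)
        omega
    | L =>
      have hi1 : i ≠ 0 := fun h0 => hc0 (by rw [← h0]; exact h1)
      have e1 : par c (i+1) = i + 1 - 1 := par_eq_L (by rw [hgu]; exact h1)
      cases h2 : g c' i with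
      | L => exact absurd (h1.trans h2.symm) hne
      | H =>
        have e2 : par c' (i+1) = 0 := par_eq_H (by rw [hgu']; exact h2)
        omega
      | R =>
        have e2 : par c' (i+1) = i + 1 + 1 := par_eq_R (by rw [hgu']; exact h2)
        omega
    | R =>
      have e1 : par c (i+1) = i + 1 + 1 := par_eq_R (by rw [hgu]; exact h1)
      cases h2 : g c' i with
      | R => exact absurd (h1.trans h2.symm) hne
      | H =>
        have e2 : par c' (i+1) = 0 := par_eq_H (by rw [hgu']; exact h2)
        omega
      | L =>
        have hi1 : i ≠ 0 := fun h0 => hi0 (by rw [← h0]; exact h2)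
        have e2 : par c' (i+1) = i + 1 - 1 := par_eq_L (by rw [hgu']; exact h2)
        omega
  refine ⟨⟨i+1, by omega⟩, ⟨par c (i+1), by omega⟩, ⟨par c' (i+1), by omega⟩,
    adj_par hc hn hu1 hum _ _, ?_, ?_⟩
  · -- non-adjacency
    intro hadj
    rw [adj_iff hc hn] at hadj
    obtain ⟨j, hj1, hj2, hab⟩ := hadj
    rcases hab with ⟨ha, hb⟩ | ⟨hb, ha⟩
    · have ea : i + 1 = j := ha
      have eb : par c' (i+1) = par c j := hb
      rw [← ea] at eb
      exact hvw eb.symm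
    · have eb : par c' (i+1) = j := hb
      have ea : i + 1 = par c j := ha
      rcases par_mem c' (i+1) with h0 | hL | hR
      · omega
      · have hii : 1 ≤ i := by omega
        have hsymL : g c' i = .L := by rw [← hgu']; exact par_eq_pred (by omega) hL
        have hpar_i : par c i = i + 1 := by
          have hji : j = i := by omega
          rw [← hji, ← ea]
          omega
        have hsymR : g c (i-1) = .R := par_eq_succ hpar_i
        have hsymR' : g c' (i-1) = .R := by rw [← hoth (i-1) (by omega)]; exact hsymR
        exact hc'.1.2 (i-1) ⟨hsymR', by rw [show i - 1 + 1 = i by omega]; exact hsymL⟩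
      · have hsymR : g c' i = .R := by rw [← hgu']; exact par_eq_succ hR
        have hpar_i2 : par c (i+2) = i + 1 := by
          have hji : j = i + 2 := by omega
          rw [← hji, ← ea]
        have hsymL : g c (i+1) = .L := by
          have := par_eq_pred (by omega : 2 ≤ i + 2) hpar_i2
          rwa [show i + 2 - 1 = i + 1 by omega] at this
        have hsymL' : g c' (i+1) = .L := by rw [← hoth (i+1) (by omega)]; exact hsymL
        exact hc'.1.2 i ⟨hsymR, hsymL'⟩
  · -- graph equality
    ext a b
    rw [SimpleGraph.sup_adj, SimpleGraph.deleteEdges_adj, SimpleGraph.fromEdgeSet_adj]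
    simp only [Set.mem_singleton_iff]
    constructor
    · intro hadj'
      have hne_ab : a ≠ b := hadj'.ne
      rw [adj_iff hc' hn'] at hadj'
      obtain ⟨j, hj1, hj2, hab⟩ := hadj'
      by_cases hju : j = i + 1
      · subst hju
        right
        refine ⟨?_, hne_ab⟩
        rcases hab with ⟨ha, hb⟩ | ⟨hb, ha⟩
        · rw [show a = (⟨i+1, by omega⟩ : Fin n) from Fin.ext ha,
            show b = (⟨par c' (i+1), by omega⟩ : Fin n) from Fin.ext hb]
        · rw [show b = (⟨i+1, by omega⟩ : Fin n) from Fin.ext hb,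
            show a = (⟨par c' (i+1), by omega⟩ : Fin n) from Fin.ext ha,
            Sym2.eq_swap]
      · left
        have hpj : par c j = par c' j := hparag j hj1 hju
        constructor
        · rw [adj_iff hc hn]
          exact ⟨j, hj1, by omega, by rw [hpj]; exact hab⟩
        · intro heq
          rw [Sym2.eq_iff] at heq
          rcases heq with ⟨hea, heb⟩ | ⟨hea, heb⟩
          · rcases hab with ⟨ha, hb⟩ | ⟨hb, ha⟩
            · exact hju (by rw [← ha, hea])
            · have hj' : j = par c (i+1) := by rw [← hb, heb]
              have h2c : par c (par c (i+1)) ≠ i + 1 := no2cycle hc hu1 (by omega) rfl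
              have hpcj : par c j = i + 1 := by rw [hpj, ← ha, hea]
              rw [hj'] at hpcj
              exact h2c hpcj
          · rcases hab with ⟨ha, hb⟩ | ⟨hb, ha⟩
            · have hj' : j = par c (i+1) := by rw [← ha, hea]
              have h2c : par c (par c (i+1)) ≠ i + 1 := no2cycle hc hu1 (by omega) rfl
              have hpcj : par c j = i + 1 := by rw [hpj, ← hb, heb]
              rw [hj'] at hpcj
              exact h2c hpcj
            · exact hju (by rw [← hb, heb])
    · rintro (⟨hadjC, hdel⟩ | ⟨heq, hne_ab⟩)
      · rw [adj_iff hc hn] at hadjC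
        obtain ⟨j, hj1, hj2, hab⟩ := hadjC
        by_cases hju : j = i + 1
        · exfalso
          subst hju
          apply hdel
          rcases hab with ⟨ha, hb⟩ | ⟨hb, ha⟩
          · rw [show a = (⟨i+1, by omega⟩ : Fin n) from Fin.ext ha,
              show b = (⟨par c (i+1), by omega⟩ : Fin n) from Fin.ext hb]
          · rw [show b = (⟨i+1, by omega⟩ : Fin n) from Fin.ext hb,
              show a = (⟨par c (i+1), by omega⟩ : Fin n) from Fin.ext ha,
              Sym2.eq_swap]
        · rw [adj_iff hc' hn']
          exact ⟨j, hj1, by omega, by rw [← hparag j hj1 hju]; exact hab⟩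
      · rw [adj_iff hc' hn']
        rw [Sym2.eq_iff] at heq
        refine ⟨i+1, hu1, by omega, ?_⟩
        rcases heq with ⟨hea, heb⟩ | ⟨hea, heb⟩
        · refine Or.inl ⟨by rw [hea], by rw [heb]⟩
        · refine Or.inr ⟨by rw [heb], by rw [hea]⟩

end FanGray
/-- There is a pivot Gray code listing of all spanning trees of the fan graph `F_n`:
a duplicate-free list containing exactly the spanning trees of `F_n`, in which each
tree is obtained from its predecessor by removing an edge `uv` and adding an edge `uw`
sharing the common endpoint `u`. -/
theorem fan_pivot_gray_code_exists (n : ℕ) (hn : 2 ≤ n) :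
    ∃ l : List (SimpleGraph (Fin n)),
      l.Nodup ∧
      (∀ H : SimpleGraph (Fin n), H ∈ l ↔ (H ≤ fanGraph n ∧ H.IsTree)) ∧
      (∀ i : ℕ, ∀ h : i + 1 < l.length,
        ∃ u v w : Fin n,
          (l.get ⟨i, by omega⟩).Adj u v ∧ ¬ (l.get ⟨i, by omega⟩).Adj u w ∧
          l.get ⟨i + 1, h⟩ =
            ((l.get ⟨i, by omega⟩).deleteEdges {s(u, v)}) ⊔
              SimpleGraph.fromEdgeSet {s(u, w)}) := by
  haveI : NeZero n := ⟨by omega⟩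
  classical
  obtain ⟨⟨hA, hB⟩, hlast, hmemA, hmemB, ⟨hndA, hndB⟩, hchA, hchB⟩ :=
    FanGray.AB_spec (n-1) (by omega)
  set codes := (FanGray.AB (n-1)).2 with hcodes
  have hok : ∀ c ∈ codes, FanGray.Ok c ∧ c.length + 1 = n := by
    intro c hcmem
    have := (hmemB c).mp hcmem
    exact ⟨this.2, by omega⟩
  refine ⟨codes.map (FanGray.graphOf n), ?_, ?_, ?_⟩
  · refine List.Nodup.map_on ?_ hndB
    intro c hcm c' hcm' heq
    exact FanGray.graphOf_inj (hok c hcm).1 (hok c' hcm').1 (hok c hcm).2 (hok c' hcm').2 heq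
  · intro H
    rw [List.mem_map]
    constructor
    · rintro ⟨c, hcm, rfl⟩
      exact ⟨FanGray.graphOf_le_fan (hok c hcm).1 (hok c hcm).2,
        FanGray.graphOf_isTree (hok c hcm).1 (hok c hcm).2⟩
    · rintro ⟨hle, htree⟩
      refine ⟨FanGray.codeOf n H, ?_, FanGray.graphOf_codeOf hn hle htree⟩
      exact (hmemB _).mpr ⟨by rw [FanGray.codeOf_length], FanGray.ok_codeOf hn hle htree⟩
  · intro i h
    have hlenmap : (codes.map (FanGray.graphOf n)).length = codes.length :=
      List.length_map _
    have hi1 : i + 1 < codes.length := by rw [hlenmap] at h; exact h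
    have hget : ∀ (k : ℕ) (hk1 : k < (codes.map (FanGray.graphOf n)).length),
        (codes.map (FanGray.graphOf n)).get ⟨k, hk1⟩ =
          FanGray.graphOf n (codes.get ⟨k, by rw [← hlenmap]; exact hk1⟩) := by
      intro k hk1
      simp [List.get_eq_getElem, List.getElem_map]
    have hD := List.isChain_iff_getElem.mp hchB i (by
      rw [List.length_map] at h
      omega)
    have hm1 : (codes.get ⟨i, by omega⟩) ∈ codes := codes.get_mem _
    have hm2 : (codes.get ⟨i+1, hi1⟩) ∈ codes := codes.get_mem _
    obtain ⟨u, v, w, h1, h2, h3⟩ := FanGray.gray_step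
      (hok _ hm1).1 (hok _ hm2).1 (hok _ hm1).2 (hok _ hm2).2 hD
    refine ⟨u, v, w, ?_, ?_, ?_⟩
    · rw [hget i (by omega)]; exact h1
    · rw [hget i (by omega)]; exact h2
    · rw [hget (i+1) h, hget i (by omega)]; exact h3
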